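/- (Bound (34b).) Let β > 0, ε > 0, L > 0, T_Δ a positive natural number, and ω_Q ≥ 0. Let Q_n, Q̂_n, Q_b, Q̂_b be real numbers with |Q_n − Q̂_n| ≤ T_Δ·ω_Q and |Q_b − Q̂_b| ≤ T_Δ·ω_Q. Define u(c) := min(max(ε·c/(2·β), 0), L) and G(u, c) := (β/ε)·u² − c·u. Then |G(u(Q̂_n − Q̂_b), Q_n − Q_b) − G(u(Q_n − Q_b), Q_n − Q_b)| ≤ (2·ε/β)·(T_Δ·ω_Q)². -/

import Mathlib

/-- The quadratic queue-price routing objective `G(u, c) = (β/ε)·u² − c·u`. -/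
noncomputable def qpObjective (β ε u c : ℝ) : ℝ := (β / ε) * u ^ 2 - c * u

/-- The clamped minimizer `u(c) = clamp(ε·c/(2·β); [0, L])`. -/
noncomputable def qpMinimizer (β ε L c : ℝ) : ℝ := min (max (ε * c / (2 * β)) 0) L

/-! Completing the square, `G(u, c) = (β/ε)·((u − m)² − m²)` with `m = ε·c/(2β)`, so `u(c)` is the
projection of `m` onto `[0, L]`. By the variational inequality of that projection, using the
projection of `m' = ε·ĉ/(2β)` instead costs at most `(β/ε)·(m' − m)² = ε/(4β)·(ĉ − c)²`, and `|ĉ − c| ≤ 2·T_Δ·ω_Q`. -/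

theorem clamp_variational_ineq {a b v x : ℝ} (hav : a ≤ v) (hvb : v ≤ b) :
    (v - min (max x a) b) * (x - min (max x a) b) ≤ 0 := by
  rcases le_total x a with hxa | hax
  · rw [max_eq_right hxa, min_eq_left (hav.trans hvb)]
    nlinarith
  · rcases le_total x b with hxb | hbx
    · simp [max_eq_left hax, min_eq_left hxb]
    · rw [max_eq_left hax, min_eq_right hbx]
      nlinarith

theorem sq_clamp_sub_sub_sq_le {a b v x x' : ℝ} (hav : a ≤ v) (hvb : v ≤ b) :
    (min (max x' a) b - x) ^ 2 - (v - x) ^ 2 ≤ (x' - x) ^ 2 := by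
  nlinarith [clamp_variational_ineq (x := x') hav hvb,
    sq_nonneg (min (max x' a) b - v - (x' - x))]

theorem qpMinimizer_mem_Icc {L : ℝ} (hL : 0 ≤ L) (β ε c : ℝ) :
    qpMinimizer β ε L c ∈ Set.Icc 0 L :=
  ⟨le_min (le_max_right _ _) hL, min_le_right _ _⟩

theorem qpObjective_eq_sq_sub {β ε : ℝ} (hβ : β ≠ 0) (hε : ε ≠ 0) (u c : ℝ) :
    qpObjective β ε u c = (β / ε) * ((u - ε * c / (2 * β)) ^ 2 - (ε * c / (2 * β)) ^ 2) := by
  unfold qpObjective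
  field_simp
  ring

theorem qpObjective_qpMinimizer_le {β ε L : ℝ} (hβ : 0 < β) (hε : 0 < ε) (c : ℝ) {v : ℝ}
    (hv : v ∈ Set.Icc 0 L) :
    qpObjective β ε (qpMinimizer β ε L c) c ≤ qpObjective β ε v c := by
  rw [qpObjective_eq_sq_sub hβ.ne' hε.ne', qpObjective_eq_sq_sub hβ.ne' hε.ne']
  have h := sq_clamp_sub_sub_sq_le (x := ε * c / (2 * β)) (x' := ε * c / (2 * β)) hv.1 hv.2
  refine mul_le_mul_of_nonneg_left ?_ (by positivity)
  unfold qpMinimizer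
  linarith

theorem qpObjective_qpMinimizer_sub_le {β ε L : ℝ} (hβ : 0 < β) (hε : 0 < ε) (hL : 0 ≤ L)
    (c c' : ℝ) :
    qpObjective β ε (qpMinimizer β ε L c') c - qpObjective β ε (qpMinimizer β ε L c) c
      ≤ ε / (4 * β) * (c' - c) ^ 2 := by
  obtain ⟨hu0, huL⟩ := qpMinimizer_mem_Icc hL β ε c
  have h := sq_clamp_sub_sub_sq_le (x := ε * c / (2 * β)) (x' := ε * c' / (2 * β)) hu0 huL
  calc _ = (β / ε) * ((qpMinimizer β ε L c' - ε * c / (2 * β)) ^ 2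
          - (qpMinimizer β ε L c - ε * c / (2 * β)) ^ 2) := by
        rw [qpObjective_eq_sq_sub hβ.ne' hε.ne', qpObjective_eq_sq_sub hβ.ne' hε.ne']
        ring
    _ ≤ (β / ε) * (ε * c' / (2 * β) - ε * c / (2 * β)) ^ 2 := by
        gcongr
        exact h
    _ = ε / (4 * β) * (c' - c) ^ 2 := by
        field_simp
        ring

theorem routing_objective_loss_bound_u_general
    (β ε L : ℝ) (hβ : 0 < β) (hε : 0 < ε) (hL : 0 < L)
    (TΔ : ℕ)
    (ωQ : ℝ)
    (Qn Qnhat Qb Qbhat : ℝ)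
    (hQn : |Qn - Qnhat| ≤ (TΔ : ℝ) * ωQ)
    (hQb : |Qb - Qbhat| ≤ (TΔ : ℝ) * ωQ) :
    |qpObjective β ε (qpMinimizer β ε L (Qnhat - Qbhat)) (Qn - Qb)
        - qpObjective β ε (qpMinimizer β ε L (Qn - Qb)) (Qn - Qb)|
      ≤ (2 * ε / β) * ((TΔ : ℝ) * ωQ) ^ 2 := by
  set r : ℝ := (TΔ : ℝ) * ωQ
  have hdiff : |(Qnhat - Qbhat) - (Qn - Qb)| ≤ 2 * r := by
    calc _ = |(Qb - Qbhat) - (Qn - Qnhat)| := by congr 1; ring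
      _ ≤ |Qb - Qbhat| + |Qn - Qnhat| := abs_sub _ _
      _ ≤ 2 * r := by linarith
  have hsq : ((Qnhat - Qbhat) - (Qn - Qb)) ^ 2 ≤ (2 * r) ^ 2 :=
    sq_le_sq' (abs_le.mp hdiff).1 (abs_le.mp hdiff).2
  rw [abs_of_nonneg (sub_nonneg.mpr (qpObjective_qpMinimizer_le hβ hε _
    (qpMinimizer_mem_Icc hL.le β ε _)))]
  calc _ ≤ ε / (4 * β) * ((Qnhat - Qbhat) - (Qn - Qb)) ^ 2 :=
        qpObjective_qpMinimizer_sub_le hβ hε hL.le _ _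
    _ ≤ ε / (4 * β) * (2 * r) ^ 2 := by gcongr
    _ = ε / β * r ^ 2 := by field_simp; ring
    _ ≤ (2 * ε / β) * r ^ 2 := by gcongr; linarith

/-- Bound (34b): optimality loss of the routing objective `f₂` caused by
using the window-start backlog approximations. -/
theorem routing_objective_loss_bound_u
    (β ε L : ℝ) (hβ : 0 < β) (hε : 0 < ε) (hL : 0 < L)
    (TΔ : ℕ) (hTΔ : 0 < TΔ)
    (ωQ : ℝ) (hωQ : 0 ≤ ωQ)
    (Qn Qnhat Qb Qbhat : ℝ)
    (hQn : |Qn - Qnhat| ≤ (TΔ : ℝ) * ωQ)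
    (hQb : |Qb - Qbhat| ≤ (TΔ : ℝ) * ωQ) :
    |qpObjective β ε (qpMinimizer β ε L (Qnhat - Qbhat)) (Qn - Qb)
        - qpObjective β ε (qpMinimizer β ε L (Qn - Qb)) (Qn - Qb)|
      ≤ (2 * ε / β) * ((TΔ : ℝ) * ωQ) ^ 2 :=
  routing_objective_loss_bound_u_general β ε L hβ hε hL TΔ ωQ Qn Qnhat Qb Qbhat hQn hQb
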